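/- arXiv:2501.11421 — 2 statements merged into one kernel-verified Lean document; each statement's English description precedes it below -/
import Mathlib

section
/- Let a > 1 and B > 1 be constants, and let x > (B/(B-1))·(a-1). Then x^{a-1}·e^{-x} < Γ(a, x) < B·x^{a-1}·e^{-x}, where Γ(a,x) = ∫_x^∞ t^{a-1} e^{-t} dt is the upper incomplete gamma function. -/
open Set MeasureTheory Real Filter Topology

/-- The upper incomplete gamma function `Γ(a, x) = ∫_x^∞ t^(a-1) e^(-t) dt`. -/
noncomputable def upperGamma (a x : ℝ) : ℝ := ∫ t in Set.Ioi x, t ^ (a - 1) * Real.exp (-t)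

lemma integrableOn_aux {s x : ℝ} (hs : 0 < s) (hx : 0 < x) :
    IntegrableOn (fun t : ℝ => t ^ (s - 1) * Real.exp (-t)) (Ioi x) := by
  have := (Real.GammaIntegral_convergent hs).mono_set (Ioi_subset_Ioi hx.le)
  exact this.congr_fun (fun t ht => mul_comm _ _) measurableSet_Ioi

/-- Borwein et al.: for `a > 1`, `B > 1` and `x > (B/(B-1))·(a-1)`, one has
`x^(a-1) e^(-x) < Γ(a, x) < B · x^(a-1) e^(-x)`. -/
theorem stmt_1 (a B x : ℝ) (ha : 1 < a) (hB : 1 < B) (hx : B / (B - 1) * (a - 1) < x) :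
    x ^ (a - 1) * Real.exp (-x) < upperGamma a x ∧
      upperGamma a x < B * (x ^ (a - 1) * Real.exp (-x)) := by
  have hB1 : 0 < B - 1 := by linarith
  have ha1 : 0 < a - 1 := by linarith
  have hBB : 1 < B / (B - 1) := by
    rw [lt_div_iff₀ hB1]; linarith
  have hxa : a - 1 < x := lt_of_le_of_lt (by nlinarith) hx
  have hx0 : 0 < x := by linarith
  -- integrability
  have hI1 : IntegrableOn (fun t : ℝ => t ^ (a - 1) * Real.exp (-t)) (Ioi x) :=
    integrableOn_aux (by linarith : (0:ℝ) < a) hx0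
  have hI2 : IntegrableOn (fun t : ℝ => t ^ (a - 2) * Real.exp (-t)) (Ioi x) := by
    have := integrableOn_aux (s := a - 1) (by linarith) hx0
    have e : a - 1 - 1 = a - 2 := by ring
    rw [e] at this
    exact this
  -- integration by parts
  set G : ℝ → ℝ := fun t => -(t ^ (a - 1) * Real.exp (-t)) with hG
  have hderiv : ∀ t ∈ Ioi x, HasDerivAt G
      (t ^ (a - 1) * Real.exp (-t) - (a - 1) * (t ^ (a - 2) * Real.exp (-t))) t := by
    intro t ht
    have ht0 : (0:ℝ) < t := lt_trans hx0 ht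
    have h1 : HasDerivAt (fun t : ℝ => t ^ (a - 1)) ((a - 1) * t ^ (a - 1 - 1)) t :=
      Real.hasDerivAt_rpow_const (Or.inl ht0.ne')
    have h2 : HasDerivAt (fun t : ℝ => Real.exp (-t)) (-Real.exp (-t)) t := by
      simpa using (hasDerivAt_neg t).exp
    have h3 : HasDerivAt G (-((a - 1) * t ^ (a - 1 - 1) * Real.exp (-t) + t ^ (a - 1) * -Real.exp (-t))) t :=
      (h1.mul h2).neg
    convert h3 using 1
    have : a - 1 - 1 = a - 2 := by ring
    rw [this]; ring
  have htend : Tendsto G atTop (𝓝 0) := by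
    have h := tendsto_rpow_mul_exp_neg_mul_atTop_nhds_zero (a - 1) 1 one_pos
    have h' : Tendsto (fun t : ℝ => t ^ (a - 1) * Real.exp (-t)) atTop (𝓝 0) := by
      refine h.congr (fun t => by norm_num)
    simpa using h'.neg
  have hcont : ContinuousWithinAt G (Ici x) x := by
    apply ContinuousAt.continuousWithinAt
    have : ContinuousAt (fun t : ℝ => t ^ (a - 1)) x :=
      Real.continuousAt_rpow_const x (a - 1) (Or.inl hx0.ne')
    exact ((this.mul (Real.continuous_exp.comp continuous_neg).continuousAt)).neg
  have hparts := integral_Ioi_of_hasDerivAt_of_tendsto hcont hderiv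
    (hI1.sub (hI2.const_mul (a - 1))) htend
  rw [integral_sub hI1 (hI2.const_mul (a - 1)), MeasureTheory.integral_const_mul] at hparts
  set I := upperGamma a x with hIdef
  set J := ∫ t in Ioi x, t ^ (a - 2) * Real.exp (-t) with hJdef
  have hkey : I - (a - 1) * J = x ^ (a - 1) * Real.exp (-x) := by
    rw [hIdef, upperGamma]
    rw [hparts]; simp [hG]
  -- J > 0
  have hJpos : 0 < J := by
    rw [hJdef]
    apply (setIntegral_pos_iff_support_of_nonneg_ae _ hI2).2
    · have : (Function.support fun t : ℝ => t ^ (a - 2) * Real.exp (-t)) ∩ Ioi x = Ioi x := by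
        apply inter_eq_right.2
        intro t ht
        have ht0 : (0:ℝ) < t := lt_trans hx0 ht
        exact (mul_pos (Real.rpow_pos_of_pos ht0 _) (Real.exp_pos _)).ne'
      rw [this]
      simp
    · filter_upwards [ae_restrict_mem measurableSet_Ioi] with t ht
      have ht0 : (0:ℝ) < t := lt_trans hx0 ht
      positivity
  -- J ≤ I / x, i.e. x * J ≤ I
  have hJle : x * J ≤ I := by
    have : x * J = ∫ t in Ioi x, x * (t ^ (a - 2) * Real.exp (-t)) := by
      rw [hJdef, MeasureTheory.integral_const_mul]
    rw [this, hIdef, upperGamma]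
    apply setIntegral_mono_on (hI2.const_mul x) hI1 measurableSet_Ioi
    intro t ht
    have ht0 : (0:ℝ) < t := lt_trans hx0 ht
    have h1 : t * t ^ (a - 2) = t ^ (a - 1) := by
      nth_rewrite 1 [← Real.rpow_one t]
      rw [← Real.rpow_add ht0]
      congr 1; ring
    rw [← h1]
    have : x * t ^ (a - 2) ≤ t * t ^ (a - 2) := by
      apply mul_le_mul_of_nonneg_right (le_of_lt ht) (Real.rpow_nonneg ht0.le _)
    nlinarith [Real.exp_pos (-t), Real.rpow_nonneg ht0.le (a - 2)]
  have hGpos : 0 < x ^ (a - 1) * Real.exp (-x) :=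
    mul_pos (Real.rpow_pos_of_pos hx0 _) (Real.exp_pos _)
  constructor
  · nlinarith
  · -- I ≤ G*x/(x-(a-1)) < B*G
    have h1 : I * (x - (a - 1)) ≤ x ^ (a - 1) * Real.exp (-x) * x := by nlinarith
    have h2 : B / (B - 1) * (a - 1) * (B - 1) < x * (B - 1) := by nlinarith
    rw [div_mul_eq_mul_div, div_mul_eq_mul_div, mul_div_assoc,
      div_self hB1.ne', mul_one] at h2
    -- h2 : B * (a-1) < x * (B-1)
    nlinarith [hGpos, hJpos, mul_pos ha1 hJpos]
end

section
/- Suppose real numbers μ_1 ≥ μ_2 ≥ … ≥ μ_M with gaps Δ_k = μ_k − μ_{k+1}, and let Δ_{(K)} be the K-th largest gap. Suppose confidence bounds satisfy μ_m − 2c ≤ l_m ≤ μ_m ≤ r_m ≤ μ_m + 2c for all m. Then for each k ∈ {K, …, M−1} and the corresponding arm m_k, r_{m_k} − l_{m_k+1} ≤ Δ_{(k)} + 4c ≤ Δ_{(K)} + 4c; hence there exist M−K gaps whose upper-confidence-bound value is at most Δ_{(K)} + 4c, so the K-th largest UCB gap satisfies UΔ^{(K)} ≤ Δ_{(K)} +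 4c. -/
/-- The `k`-th largest element of a multiset of reals (1-indexed). -/
noncomputable def kthLargest (v : Multiset ℝ) (k : ℕ) : ℝ :=
  -(((v.map (fun x => -x)).sort (· ≤ ·)).getD (k - 1) 0)

/-- The multiset of consecutive "gaps" `f i - g (i+1)` for `i = 0, …, M-1`
(arms indexed by `Fin (M+1)` in decreasing order of means). -/
noncomputable def pairGaps (M : ℕ) (f g : Fin (M + 1) → ℝ) : Multiset ℝ :=
  ((Finset.univ : Finset (Fin M)).val).map (fun i => f i.castSucc - g i.succ)

/-- Counting elements `≤ y` is antitone under pointwise domination. -/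
lemma countLE_mono {v w : Multiset ℝ} (h : Multiset.Rel (· ≤ ·) v w) (y : ℝ) :
    (w.filter (· ≤ y)).card ≤ (v.filter (· ≤ y)).card := by
  induction h with
  | zero => simp
  | @cons a b as bs hab hrel ih =>
    rw [Multiset.filter_cons, Multiset.filter_cons]
    simp only [Multiset.card_add]
    have : b ≤ y → a ≤ y := fun hb => le_trans hab hb
    split_ifs with h1 h2
    · simp only [Multiset.card_singleton]; omega
    · exact absurd (this h1) h2
    · simp only [Multiset.card_singleton, Multiset.card_zero]; omega
    · simp only [Multiset.card_zero]; omega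

/-- In a sorted list, if at least `i+1` elements are `≤ y`, then the `i`-th one is. -/
lemma sorted_getElem_le_of_count {L : List ℝ} (hL : L.Pairwise (· ≤ ·)) {i : ℕ}
    (hi : i < L.length) {y : ℝ}
    (hcount : i + 1 ≤ (L.filter (fun x => decide (x ≤ y))).length) : L[i] ≤ y := by
  by_contra hy
  push_neg at hy
  have hdrop : (L.drop i).filter (fun x => decide (x ≤ y)) = [] := by
    rw [List.filter_eq_nil_iff]
    intro x hx
    rw [List.mem_iff_getElem] at hx
    obtain ⟨j, hj, rfl⟩ := hx
    rw [List.getElem_drop]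
    have hij : i + j < L.length := by
      have := List.length_drop (i := i) (l := L) ▸ hj; omega
    have : L[i] ≤ L[i + j] := by
      have := hL.rel_get_of_le (a := ⟨i, hi⟩) (b := ⟨i + j, hij⟩)
        (by simp [Fin.le_def])
      simpa using this
    simp only [decide_eq_true_eq]
    push_neg
    linarith
  have := List.take_append_drop i L
  have hsplit : L.filter (fun x => decide (x ≤ y)) =
      (L.take i).filter (fun x => decide (x ≤ y)) ++
      (L.drop i).filter (fun x => decide (x ≤ y)) := by
    rw [← List.filter_append, this]
  rw [hsplit, hdrop, List.append_nil] at hcount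
  have : ((L.take i).filter (fun x => decide (x ≤ y))).length ≤ (L.take i).length :=
    List.length_filter_le _ _
  have : (L.take i).length ≤ i := by simp
  omega

/-- In a sorted list, at least `i+1` elements are `≤` the `i`-th element. -/
lemma count_ge_of_sorted {L : List ℝ} (hL : L.Pairwise (· ≤ ·)) {i : ℕ} (hi : i < L.length) :
    i + 1 ≤ (L.filter (fun x => decide (x ≤ L[i]))).length := by
  have hsplit : L.filter (fun x => decide (x ≤ L[i])) =
      (L.take (i+1)).filter (fun x => decide (x ≤ L[i])) ++
      (L.drop (i+1)).filter (fun x => decide (x ≤ L[i])) := by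
    rw [← List.filter_append, List.take_append_drop]
  have htake : (L.take (i+1)).filter (fun x => decide (x ≤ L[i])) = L.take (i+1) := by
    rw [List.filter_eq_self]
    intro x hx
    rw [List.mem_iff_getElem] at hx
    obtain ⟨j, hj, rfl⟩ := hx
    have hjlen : j < L.length := lt_of_lt_of_le hj (by simp [List.length_take])
    rw [List.getElem_take]
    have hji : j ≤ i := by
      have : (L.take (i+1)).length ≤ i + 1 := by simp
      omega
    have : L[j] ≤ L[i] := by
      have := hL.rel_get_of_le (a := ⟨j, hjlen⟩) (b := ⟨i, hi⟩) (by simp [Fin.le_def, hji])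
      simpa using this
    simpa using this
  have hlen : (L.take (i+1)).length = i + 1 := by
    rw [List.length_take]; omega
  rw [hsplit, List.length_append, htake, hlen]
  omega

/-- Sorted lists of pointwise-dominated multisets compare pointwise. -/
lemma sort_getD_le {v w : Multiset ℝ} (h : Multiset.Rel (· ≤ ·) v w) (i : ℕ) :
    (v.sort (· ≤ ·)).getD i 0 ≤ (w.sort (· ≤ ·)).getD i 0 := by
  have hcard : Multiset.card v = Multiset.card w := Multiset.card_eq_card_of_rel h
  set L := v.sort (· ≤ ·) with hLdef
  set L' := w.sort (· ≤ ·) with hL'def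
  have hLlen : L.length = Multiset.card v := Multiset.length_sort _
  have hL'len : L'.length = Multiset.card w := Multiset.length_sort _
  by_cases hi : i < Multiset.card v
  · have hi1 : i < L.length := by omega
    have hi2 : i < L'.length := by omega
    rw [List.getD_eq_getElem _ _ hi1, List.getD_eq_getElem _ _ hi2]
    set y := L'[i] with hy
    have hw : i + 1 ≤ (L'.filter (fun x => decide (x ≤ y))).length :=
      count_ge_of_sorted (Multiset.pairwise_sort _ _) hi2
    -- transfer counts through the multisets
    have hwv : (L.filter (fun x => decide (x ≤ y))).length ≥ i + 1 := by
      have h1 : (w.filter (· ≤ y)).card = (L'.filter (fun x => decide (x ≤ y))).length := by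
        conv_lhs => rw [← Multiset.sort_eq w (· ≤ ·)]
        simp [← hL'def, Multiset.filter_coe]
      have h2 : (v.filter (· ≤ y)).card = (L.filter (fun x => decide (x ≤ y))).length := by
        conv_lhs => rw [← Multiset.sort_eq v (· ≤ ·)]
        simp [← hLdef, Multiset.filter_coe]
      have := countLE_mono h y
      omega
    exact sorted_getElem_le_of_count (Multiset.pairwise_sort _ _) hi1 hwv
  · rw [List.getD_eq_default _ _ (by omega), List.getD_eq_default _ _ (by omega)]

/-- `kthLargest` is monotone under pointwise domination. -/
lemma kthLargest_mono {v w : Multiset ℝ} (h : Multiset.Rel (· ≤ ·) v w) (k : ℕ) :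
    kthLargest v k ≤ kthLargest w k := by
  unfold kthLargest
  have hrel : Multiset.Rel (· ≤ ·) (w.map (fun x => -x)) (v.map (fun x => -x)) := by
    rw [Multiset.rel_map]
    have := (Multiset.rel_flip (r := (· ≤ ·))).2 h
    exact this.mono (fun a _ b _ hab => neg_le_neg hab)
  have := sort_getD_le hrel (k - 1)
  linarith

/-- `kthLargest` is antitone in `k` (within range). -/
lemma kthLargest_anti {v : Multiset ℝ} {a b : ℕ} (hab : a ≤ b) (hb : b - 1 < Multiset.card v) :
    kthLargest v b ≤ kthLargest v a := by
  unfold kthLargest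
  set L := (v.map (fun x => -x)).sort (· ≤ ·) with hL
  have hlen : L.length = Multiset.card v := by
    rw [hL, Multiset.length_sort, Multiset.card_map]
  have hb' : b - 1 < L.length := by omega
  have ha' : a - 1 < L.length := by omega
  rw [List.getD_eq_getElem _ _ hb', List.getD_eq_getElem _ _ ha']
  have : L[a-1] ≤ L[b-1] := by
    have := (Multiset.pairwise_sort (v.map (fun x => -x)) (· ≤ ·)).rel_get_of_le
      (a := ⟨a-1, ha'⟩) (b := ⟨b-1, hb'⟩) (Fin.mk_le_mk.2 (by omega))
    simpa [← hL] using this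
  linarith

/-- Shifting all elements shifts `kthLargest`. -/
lemma kthLargest_map_add (v : Multiset ℝ) (a : ℝ) {k : ℕ} (hk : k - 1 < Multiset.card v) :
    kthLargest (v.map (fun x => x + a)) k = kthLargest v k + a := by
  unfold kthLargest
  have hmap : (v.map (fun x => x + a)).map (fun x => -x)
      = (v.map (fun x => -x)).map (fun y => y + (-a)) := by
    rw [Multiset.map_map, Multiset.map_map]
    congr 1; funext x; simp; ring
  have hsort : ((v.map (fun x => -x)).sort (· ≤ ·)).map (fun y => y + (-a))
      = (((v.map (fun x => -x)).map (fun y => y + (-a))).sort (· ≤ ·)) :=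
    Multiset.map_sort _ _ _ _ (fun x _ y _ => by constructor <;> intro <;> linarith)
  rw [hmap, ← hsort]
  have hlen : ((v.map (fun x => -x)).sort (· ≤ ·)).length = Multiset.card v := by
    rw [Multiset.length_sort, Multiset.card_map]
  have h1 : k - 1 < ((v.map (fun x => -x)).sort (· ≤ ·)).length := by omega
  have h2 : k - 1 < (((v.map (fun x => -x)).sort (· ≤ ·)).map (fun y => y + (-a))).length := by
    simpa using h1
  rw [List.getD_eq_getElem _ _ h2, List.getD_eq_getElem _ _ h1, List.getElem_map]
  ring

/-- If all confidence bounds are within `2c` of the sorted true means, then for each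
`k ∈ {K, …, M}` the UCB gap of the arm pair realizing the `k`-th largest gap is at most
`Δ_{(k)} + 4c ≤ Δ_{(K)} + 4c`; hence there are `M - K + 1` gaps with UCB value at most
`Δ_{(K)} + 4c`, so the `K`-th largest UCB gap satisfies `UΔ^{(K)} ≤ Δ_{(K)} + 4c`. -/
theorem stmt_14 (M K : ℕ) (hK : 1 ≤ K) (hKM : K ≤ M)
    (μ l r : Fin (M + 1) → ℝ) (c : ℝ) (hc : 0 ≤ c)
    (hsort : ∀ i j : Fin (M + 1), i ≤ j → μ j ≤ μ i)
    (hconf : ∀ m, μ m - 2 * c ≤ l m ∧ l m ≤ μ m ∧ μ m ≤ r m ∧ r m ≤ μ m + 2 * c)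
    (mk : Fin M ≃ Fin M)
    (hmk : ∀ k : Fin M,
      μ (mk k).castSucc - μ (mk k).succ = kthLargest (pairGaps M μ μ) ((k : ℕ) + 1)) :
    (∀ k : Fin M, K ≤ (k : ℕ) + 1 →
      r (mk k).castSucc - l (mk k).succ ≤
          kthLargest (pairGaps M μ μ) ((k : ℕ) + 1) + 4 * c ∧
        kthLargest (pairGaps M μ μ) ((k : ℕ) + 1) + 4 * c ≤
          kthLargest (pairGaps M μ μ) K + 4 * c) ∧
    kthLargest (pairGaps M r l) K ≤ kthLargest (pairGaps M μ μ) K + 4 * c := by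
  have hcard : Multiset.card (pairGaps M μ μ) = M := by
    simp [pairGaps]
  constructor
  · intro k hk
    constructor
    · obtain ⟨h1, h2, h3, h4⟩ := hconf (mk k).castSucc
      obtain ⟨h5, h6, h7, h8⟩ := hconf (mk k).succ
      have := hmk k
      linarith
    · have : kthLargest (pairGaps M μ μ) ((k : ℕ) + 1) ≤ kthLargest (pairGaps M μ μ) K := by
        apply kthLargest_anti hk
        rw [hcard]
        have := k.isLt
        omega
      linarith
  · have hshift : kthLargest ((pairGaps M μ μ).map (fun x => x + 4 * c)) K
        = kthLargest (pairGaps M μ μ) K + 4 * c := by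
      apply kthLargest_map_add
      rw [hcard]; omega
    have hmono : kthLargest (pairGaps M r l) K ≤
        kthLargest ((pairGaps M μ μ).map (fun x => x + 4 * c)) K := by
      apply kthLargest_mono
      unfold pairGaps
      rw [Multiset.map_map, Multiset.rel_map]
      apply Multiset.rel_refl_of_refl_on
      intro i _
      obtain ⟨h1, h2, h3, h4⟩ := hconf i.castSucc
      obtain ⟨h5, h6, h7, h8⟩ := hconf i.succ
      simp only [Function.comp_apply]
      linarith
    linarith
end
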